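/- Let ε > 0 and let D be an oriented graph on n vertices such that e(B,A) ≥ ē(A,B)/3 − (ε/3)·n^2 for all subsets A, B of V(D), where ē(A,B) = e(A,B) + e(B,A). Let H be a partially oriented graph on k vertices with v⃗e(H) oriented edges. Then hom(H,D) ≥ hom(H̄,D)/3^{v⃗e(H)} − (1 − 3^{−v⃗e(H)})·(ε/2)·n^k. -/

import Mathlib

open Finset

/-- The number of arcs from `A` to `B` in the oriented graph with arc relation `Adj`. -/
def arcsFrom {V : Type*} (Adj : V → V → Prop) [DecidableRel Adj] (A B : Finset V) : ℕ :=
  ((A ×ˢ B).filter fun p => Adj p.1 p.2).card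

/-- The total number of arcs (for the oriented edges of a partially oriented graph, each
oriented edge is counted exactly once since the orientation relation is asymmetric). -/
def numArcs {V : Type*} [Fintype V] (Adj : V → V → Prop) [DecidableRel Adj] : ℕ :=
  arcsFrom Adj Finset.univ Finset.univ

/-- `hom(H,D)` for a partially oriented graph `H` given by underlying edge relation
`Ebar` and orientation relation `O`: maps `φ` sending each oriented edge of `H` to an arc
of `D` with the same orientation, and each (unoriented) edge of `H̄` to an arc of `D` in
one of the two directions. -/
def homPartialCount {W V : Type*} [Fintype W] [DecidableEq W] [Fintype V]
    (Ebar : W → W → Prop) [DecidableRel Ebar] (O : W → W → Prop) [DecidableRel O]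
    (Adj : V → V → Prop) [DecidableRel Adj] : ℕ :=
  (Finset.univ.filter fun φ : W → V =>
      (∀ x y : W, O x y → Adj (φ x) (φ y)) ∧
      (∀ x y : W, Ebar x y → Adj (φ x) (φ y) ∨ Adj (φ y) (φ x))).card

/-- `hom(H̄,D)`: the number of maps `φ : V(H) → V(D)` sending every edge of `H̄` to an arc
of `D` in one of the two directions. -/
def homBarCount {W V : Type*} [Fintype W] [DecidableEq W] [Fintype V]
    (Ebar : W → W → Prop) [DecidableRel Ebar] (Adj : V → V → Prop) [DecidableRel Adj] : ℕ :=
  (Finset.univ.filter fun φ : W → V =>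
      ∀ x y : W, Ebar x y → Adj (φ x) (φ y) ∨ Adj (φ y) (φ x)).card

/-!
Orient the edges of `H` one at a time. If `x → y` is an oriented edge, consider the maps that
satisfy every constraint of `H` except those on the pair `{x, y}`. No remaining constraint
involves both `x` and `y`, so once the values off `{x, y}` are fixed, the admissible values of
`(φ x, φ y)` range over a product `A × B`. Applying the hypothesis to these sets on each of the
at most `n ^ (k - 2)` fibers shows that orienting `x → y` divides the count by at most `3` at an
additive cost of `(ε / 3) n ^ k`. Over `m = v⃗e(H)` edges these costs sum to the geometric series
`(ε / 3) n ^ k (1 + 1/3 + ⋯ + 3 ^ (1 - m)) = (1 - 3 ^ (-m)) (ε / 2) n ^ k`.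
-/

section

variable {W V : Type*}

/-- Once the values off `{x, y}` are fixed, the admissible values at `x` and at `y` can be
combined freely. -/
def IsRectangularAt [DecidableEq W] (S : Set (W → V)) (x y : W) : Prop :=
  ∀ φ ∈ S, ∀ φ' ∈ S, (∀ z, z ≠ x → z ≠ y → φ z = φ' z) → Function.update φ y (φ' y) ∈ S

section Rectangular

variable [DecidableEq W] {x y : W}

theorem update_apply_pair_eq_or {φ φ' : W → V} {u v : W}
    (hagree : ∀ z, z ≠ x → z ≠ y → φ z = φ' z) (huv : s(u, v) ≠ s(x, y)) :
    (Function.update φ y (φ' y) u, Function.update φ y (φ' y) v) = (φ u, φ v) ∨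
      (Function.update φ y (φ' y) u, Function.update φ y (φ' y) v) = (φ' u, φ' v) := by
  by_cases hu : u = y <;> by_cases hv : v = y
  · subst hu hv; simp
  · subst hu
    have hvx : v ≠ x := by rintro rfl; exact huv Sym2.eq_swap
    simp [hv, hagree v hvx hv]
  · subst hv
    have hux : u ≠ x := by rintro rfl; exact huv rfl
    simp [hu, hagree u hux hu]
  · simp [hu, hv]

theorem isRectangularAt_setOf (Q : W → W → V → V → Prop) :
    IsRectangularAt {φ : W → V | ∀ u v, s(u, v) ≠ s(x, y) → Q u v (φ u) (φ v)} x y := by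
  intro φ hφ φ' hφ' hagree u v huv
  rcases update_apply_pair_eq_or hagree huv with h | h <;>
    obtain ⟨hu, hv⟩ := Prod.mk.inj h <;> rw [hu, hv]
  exacts [hφ u v huv, hφ' u v huv]

variable [Fintype W]

theorem restrict_compl_pair_eq_iff {φ φ' : W → V} :
    ({x, y}ᶜ : Finset W).restrict φ = ({x, y}ᶜ : Finset W).restrict φ' ↔
      ∀ z, z ≠ x → z ≠ y → φ z = φ' z := by
  simp [funext_iff, Finset.restrict]

end Rectangular

section Fibers

variable [Fintype W] [DecidableEq W] [DecidableEq V] {x y : W}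

def fiberOff (S : Finset (W → V)) (x y : W) (ψ : ({x, y}ᶜ : Finset W) → V) : Finset (W → V) :=
  {φ ∈ S | ({x, y}ᶜ : Finset W).restrict φ = ψ}

theorem card_filter_fiberOff {S : Finset (W → V)} (hS : IsRectangularAt (S : Set (W → V)) x y)
    (hxy : x ≠ y) (ψ : ({x, y}ᶜ : Finset W) → V) (p : V → V → Prop) [DecidableRel p] :
    #{φ ∈ fiberOff S x y ψ | p (φ x) (φ y)} =
      #{q ∈ (fiberOff S x y ψ).image (· x) ×ˢ (fiberOff S x y ψ).image (· y) | p q.1 q.2} := by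
  set F := fiberOff S x y ψ
  have hF : ∀ {φ}, φ ∈ F ↔ φ ∈ S ∧ ({x, y}ᶜ : Finset W).restrict φ = ψ := mem_filter
  refine card_nbij (fun φ => (φ x, φ y)) ?_ ?_ ?_
  · intro φ hφ
    simp only [mem_coe, mem_filter, mem_product, mem_image] at hφ ⊢
    exact ⟨⟨⟨φ, hφ.1, rfl⟩, φ, hφ.1, rfl⟩, hφ.2⟩
  · intro φ hφ φ' hφ' h
    simp only [mem_coe, mem_filter, hF] at hφ hφ'
    obtain ⟨hx, hy⟩ := Prod.mk.inj h
    have hagree := restrict_compl_pair_eq_iff.mp (hφ.1.2.trans hφ'.1.2.symm)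
    funext z
    by_cases hzx : z = x
    · exact hzx ▸ hx
    by_cases hzy : z = y
    · exact hzy ▸ hy
    exact hagree z hzx hzy
  · rintro ⟨a, b⟩ hab
    simp only [mem_coe, mem_filter, mem_product, mem_image] at hab
    obtain ⟨⟨⟨φ₁, h₁, rfl⟩, φ₂, h₂, rfl⟩, hp⟩ := hab
    rw [hF] at h₁ h₂
    have hagree := restrict_compl_pair_eq_iff.mp (h₁.2.trans h₂.2.symm)
    refine ⟨Function.update φ₁ y (φ₂ y), ?_, ?_⟩
    · have hres : ({x, y}ᶜ : Finset W).restrict (Function.update φ₁ y (φ₂ y)) = ψ := by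
        rw [← h₁.2, restrict_compl_pair_eq_iff]
        intro z _ hzy
        exact Function.update_of_ne hzy _ _
      rw [mem_coe, mem_filter, hF, Function.update_of_ne hxy, Function.update_self]
      exact ⟨⟨hS φ₁ h₁.1 φ₂ h₂.1 hagree, hres⟩, hp⟩
    · simp [Function.update_of_ne hxy]

theorem card_filter_eq_sum_fiberOff {S : Finset (W → V)}
    (hS : IsRectangularAt (S : Set (W → V)) x y) (hxy : x ≠ y) (p : V → V → Prop)
    [DecidableRel p] :
    #{φ ∈ S | p (φ x) (φ y)} = ∑ ψ ∈ S.image ({x, y}ᶜ : Finset W).restrict,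
      #{q ∈ (fiberOff S x y ψ).image (· x) ×ˢ (fiberOff S x y ψ).image (· y) | p q.1 q.2} := by
  rw [card_eq_sum_card_fiberwise (f := ({x, y}ᶜ : Finset W).restrict)
    fun φ hφ => mem_image_of_mem _ (mem_filter.mp hφ).1]
  refine sum_congr rfl fun ψ _ => ?_
  rw [← card_filter_fiberOff hS hxy, fiberOff, filter_comm]

theorem card_image_restrict_compl_pair_le [Fintype V] (S : Finset (W → V)) (hxy : x ≠ y) :
    #(S.image ({x, y}ᶜ : Finset W).restrict) ≤ Fintype.card V ^ (Fintype.card W - 2) := by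
  refine (card_le_univ _).trans_eq ?_
  rw [Fintype.card_fun, Fintype.card_coe, card_compl, card_pair hxy]

end Fibers

theorem card_filter_product_or_le [DecidableEq V] (Adj : V → V → Prop) [DecidableRel Adj]
    (A B : Finset V) :
    #{q ∈ A ×ˢ B | Adj q.1 q.2 ∨ Adj q.2 q.1} ≤ arcsFrom Adj A B + arcsFrom Adj B A := by
  have hswap : #{q ∈ A ×ˢ B | Adj q.2 q.1} = arcsFrom Adj B A := by
    rw [arcsFrom, ← image_swap_product, filter_image,
      card_image_of_injective _ Prod.swap_injective]
    rfl
  rw [filter_or, ← hswap]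
  exact card_union_le _ _

theorem card_filter_adj_ge_of_bias [Fintype W] [DecidableEq W] [Fintype V] [DecidableEq V]
    {S : Finset (W → V)} {x y : W} (hS : IsRectangularAt (S : Set (W → V)) x y) (hxy : x ≠ y)
    (Adj : V → V → Prop) [DecidableRel Adj] {c δ : ℝ} (hc : 0 ≤ c)
    (hbias : ∀ A B : Finset V, c * (arcsFrom Adj A B + arcsFrom Adj B A : ℝ) -
      δ * Fintype.card V ^ 2 ≤ arcsFrom Adj A B) :
    c * #{φ ∈ S | Adj (φ x) (φ y) ∨ Adj (φ y) (φ x)} - δ * Fintype.card V ^ Fintype.card W ≤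
      #{φ ∈ S | Adj (φ x) (φ y)} := by
  set n := Fintype.card V
  set I := S.image ({x, y}ᶜ : Finset W).restrict
  set A := fun ψ => (fiberOff S x y ψ).image (· x)
  set B := fun ψ => (fiberOff S x y ψ).image (· y)
  have hδ : 0 ≤ δ * n ^ 2 := by simpa [arcsFrom] using hbias ∅ ∅
  have h2 : 2 ≤ Fintype.card W := by
    simpa [card_pair hxy] using card_le_univ ({x, y} : Finset W)
  have hI : (#I : ℝ) * (δ * n ^ 2) ≤ δ * n ^ Fintype.card W := by
    calc (#I : ℝ) * (δ * n ^ 2) ≤ (n ^ (Fintype.card W - 2) : ℕ) * (δ * n ^ 2) := by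
          gcongr
          exact card_image_restrict_compl_pair_le S hxy
      _ = δ * n ^ Fintype.card W := by
          rw [← pow_sub_mul_pow (n : ℝ) h2]
          push_cast
          ring
  calc c * #{φ ∈ S | Adj (φ x) (φ y) ∨ Adj (φ y) (φ x)} - δ * n ^ Fintype.card W
      ≤ c * ∑ ψ ∈ I, (#{q ∈ A ψ ×ˢ B ψ | Adj q.1 q.2 ∨ Adj q.2 q.1} : ℝ) -
          #I * (δ * n ^ 2) := by
        rw [card_filter_eq_sum_fiberOff hS hxy fun a b => Adj a b ∨ Adj b a]
        push_cast
        linarith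
    _ ≤ ∑ ψ ∈ I,
          (c * (arcsFrom Adj (A ψ) (B ψ) + arcsFrom Adj (B ψ) (A ψ) : ℝ) - δ * n ^ 2) := by
        rw [sum_sub_distrib, sum_const, nsmul_eq_mul, ← mul_sum]
        gcongr with ψ
        exact_mod_cast card_filter_product_or_le Adj (A ψ) (B ψ)
    _ ≤ ∑ ψ ∈ I, (arcsFrom Adj (A ψ) (B ψ) : ℝ) := sum_le_sum fun ψ _ => hbias (A ψ) (B ψ)
    _ = #{φ ∈ S | Adj (φ x) (φ y)} := by
        rw [card_filter_eq_sum_fiberOff hS hxy]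
        push_cast
        rfl

section Orientation

variable [Fintype W] [DecidableEq W] [Fintype V]

/-- `hom(H_T, D)`, where `H_T` is the underlying graph `Ebar` with the pairs in `T` oriented. -/
def homCountOriented (Ebar : W → W → Prop) [DecidableRel Ebar] (T : Finset (W × W))
    (Adj : V → V → Prop) [DecidableRel Adj] : ℕ :=
  #{φ : W → V | (∀ p ∈ T, Adj (φ p.1) (φ p.2)) ∧
    ∀ u v, Ebar u v → Adj (φ u) (φ v) ∨ Adj (φ v) (φ u)}

theorem homCountOriented_insert_ge (Ebar : W → W → Prop) [DecidableRel Ebar]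
    (T : Finset (W × W)) {x y : W} (hxy : x ≠ y) (hxyT : (x, y) ∉ T) (hyxT : (y, x) ∉ T)
    (hE : Ebar x y) (Adj : V → V → Prop) [DecidableRel Adj] {c δ : ℝ} (hc : 0 ≤ c)
    (hbias : ∀ A B : Finset V, c * (arcsFrom Adj A B + arcsFrom Adj B A : ℝ) -
      δ * Fintype.card V ^ 2 ≤ arcsFrom Adj A B) :
    c * homCountOriented Ebar T Adj - δ * Fintype.card V ^ Fintype.card W ≤
      homCountOriented Ebar (insert (x, y) T) Adj := by
  classical
  set S : Finset (W → V) := {φ | ∀ u v, s(u, v) ≠ s(x, y) →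
    ((u, v) ∈ T → Adj (φ u) (φ v)) ∧ (Ebar u v → Adj (φ u) (φ v) ∨ Adj (φ v) (φ u))}
  have hS : IsRectangularAt (S : Set (W → V)) x y := by
    rw [coe_filter_univ]
    exact isRectangularAt_setOf fun u v a b =>
      ((u, v) ∈ T → Adj a b) ∧ (Ebar u v → Adj a b ∨ Adj b a)
  -- Since `(x, y), (y, x) ∉ T`, the only constraints on the pair `{x, y}` left out of `S` are
  -- the edge `Ebar x y` and, after inserting it, the arc `(x, y)`.
  have hinsert : homCountOriented Ebar (insert (x, y) T) Adj = #{φ ∈ S | Adj (φ x) (φ y)} := by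
    rw [homCountOriented, filter_filter]
    congr 1
    refine filter_congr fun φ _ => ?_
    simp only [mem_insert, forall_eq_or_imp, Prod.forall]
    grind
  have hcount : homCountOriented Ebar T Adj = #{φ ∈ S | Adj (φ x) (φ y) ∨ Adj (φ y) (φ x)} := by
    rw [homCountOriented, filter_filter]
    congr 1
    refine filter_congr fun φ _ => ?_
    simp only [Prod.forall]
    grind
  rw [hinsert, hcount]
  exact card_filter_adj_ge_of_bias hS hxy Adj hc hbias

theorem homCountOriented_ge (Ebar : W → W → Prop) [DecidableRel Ebar] (T : Finset (W × W))
    (hTE : ∀ p ∈ T, Ebar p.1 p.2) (hTasymm : ∀ p ∈ T, p.swap ∉ T)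
    (Adj : V → V → Prop) [DecidableRel Adj] {ε : ℝ}
    (hbias : ∀ A B : Finset V, 1 / 3 * (arcsFrom Adj A B + arcsFrom Adj B A : ℝ) -
      ε / 3 * Fintype.card V ^ 2 ≤ arcsFrom Adj A B) :
    (homCountOriented Ebar ∅ Adj : ℝ) / 3 ^ #T -
        (1 - 1 / 3 ^ #T) * (ε / 2) * Fintype.card V ^ Fintype.card W ≤
      homCountOriented Ebar T Adj := by
  induction T using Finset.induction_on with
  | empty => simp
  | insert p T hpT ih =>
    obtain ⟨x, y⟩ := p
    have hyx : (y, x) ∉ insert (x, y) T := hTasymm _ (mem_insert_self _ _)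
    have hxy : x ≠ y := by
      rintro rfl
      exact hyx (mem_insert_self _ _)
    have ih := ih (fun p hp => hTE p (mem_insert_of_mem hp))
      (fun p hp h => hTasymm p (mem_insert_of_mem hp) (mem_insert_of_mem h))
    have hstep := homCountOriented_insert_ge Ebar T hxy hpT (fun h => hyx (mem_insert_of_mem h))
      (hTE _ (mem_insert_self _ _)) Adj (by norm_num) hbias
    rw [card_insert_of_notMem hpT]
    calc _ = 1 / 3 * ((homCountOriented Ebar ∅ Adj : ℝ) / 3 ^ #T -
          (1 - 1 / 3 ^ #T) * (ε / 2) * Fintype.card V ^ Fintype.card W) -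
          ε / 3 * Fintype.card V ^ Fintype.card W := by
          rw [pow_succ]
          field_simp
          ring
      _ ≤ 1 / 3 * homCountOriented Ebar T Adj - ε / 3 * Fintype.card V ^ Fintype.card W := by
          gcongr
      _ ≤ _ := hstep

end Orientation

end

theorem stmt6_general {W V : Type*} [Fintype W] [DecidableEq W] [Fintype V]
    (Ebar : W → W → Prop) [DecidableRel Ebar] (O : W → W → Prop) [DecidableRel O]
    (hOE : ∀ x y : W, O x y → Ebar x y) (hOasym : ∀ x y : W, O x y → ¬ O y x)
    (Adj : V → V → Prop) [DecidableRel Adj]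
    (ε : ℝ)
    (hbias : ∀ A B : Finset V, (arcsFrom Adj B A : ℝ) ≥
        ((arcsFrom Adj A B : ℝ) + (arcsFrom Adj B A : ℝ)) / 3 -
          ε / 3 * (Fintype.card V : ℝ) ^ 2) :
    (homPartialCount Ebar O Adj : ℝ) ≥
      (homBarCount Ebar Adj : ℝ) / 3 ^ numArcs O -
        (1 - 1 / 3 ^ numArcs O) * (ε / 2) * (Fintype.card V : ℝ) ^ Fintype.card W := by
  set T : Finset (W × W) := {p | O p.1 p.2}
  have hpartial : homPartialCount Ebar O Adj = homCountOriented Ebar T Adj := by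
    simp [homPartialCount, homCountOriented, T, Prod.forall]
  have hbar : homBarCount Ebar Adj = homCountOriented Ebar ∅ Adj := by
    simp [homBarCount, homCountOriented]
  have hnum : numArcs O = #T := by
    rw [numArcs, arcsFrom, univ_product_univ]
  rw [hpartial, hbar, hnum]
  refine homCountOriented_ge Ebar T (by simpa [T] using hOE) (by simpa [T] using hOasym) Adj
    fun A B => ?_
  linarith [hbias B A]

/-- Proposition: if `D` satisfies `e(B,A) ≥ ē(A,B)/3 - (ε/3) n²` for all `A, B ⊆ V(D)`,
and `H` is a partially oriented graph on `k` vertices with `v⃗e(H)` oriented edges, then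
`hom(H,D) ≥ hom(H̄,D)/3^{v⃗e(H)} - (1 - 3^{-v⃗e(H)}) (ε/2) n^k`. -/
theorem stmt6 {W V : Type*} [Fintype W] [DecidableEq W] [Fintype V] [DecidableEq V]
    (Ebar : W → W → Prop) [DecidableRel Ebar] (O : W → W → Prop) [DecidableRel O]
    (hEsymm : ∀ x y : W, Ebar x y → Ebar y x) (hEirr : ∀ x : W, ¬ Ebar x x)
    (hOE : ∀ x y : W, O x y → Ebar x y) (hOasym : ∀ x y : W, O x y → ¬ O y x)
    (Adj : V → V → Prop) [DecidableRel Adj] (hD : ∀ x y : V, Adj x y → ¬ Adj y x)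
    (ε : ℝ) (hε : 0 < ε)
    (hbias : ∀ A B : Finset V, (arcsFrom Adj B A : ℝ) ≥
        ((arcsFrom Adj A B : ℝ) + (arcsFrom Adj B A : ℝ)) / 3 -
          ε / 3 * (Fintype.card V : ℝ) ^ 2) :
    (homPartialCount Ebar O Adj : ℝ) ≥
      (homBarCount Ebar Adj : ℝ) / 3 ^ numArcs O -
        (1 - 1 / 3 ^ numArcs O) * (ε / 2) * (Fintype.card V : ℝ) ^ Fintype.card W :=
  stmt6_general Ebar O hOE hOasym Adj ε hbias
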